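/- Let q ∈ ℝ^k be a unit vector, μ ∈ [0,1], and let v₁, v₂ ∈ 𝒦_μ(q) be two nonzero vectors in the cone 𝒦_μ(q) = { x : xᵀq/‖x‖₂ ≥ 1 − μ }. Then there exist perturbations e₁, e₂ with ‖e_i‖₂ ≤ √(2μ)‖v_i‖₂ such that v₁ + e₁ and v₂ + e₂ are collinear. Consequently, the smallest singular value of the k×2 matrix [v₁ v₂] is at most √(2μ)·max(‖v₁‖₂, ‖v₂‖₂)·√2. -/

import Mathlib

open Matrix BigOperators

noncomputable def vecNorm {m : ℕ} (v : Fin m → ℝ) : ℝ :=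
  Real.sqrt (∑ i, v i ^ 2)

noncomputable def frobNorm {m n : ℕ} (A : Matrix (Fin m) (Fin n) ℝ) : ℝ :=
  Real.sqrt (∑ i, ∑ j, A i j ^ 2)

/-- spectral (operator) norm w.r.t. Euclidean norms -/
noncomputable def specNorm {m n : ℕ} (A : Matrix (Fin m) (Fin n) ℝ) : ℝ :=
  sSup {r | ∃ x : Fin n → ℝ, vecNorm x ≤ 1 ∧ r = vecNorm (A.mulVec x)}

/-- smallest singular value (for matrices with at least as many rows as columns) -/
noncomputable def sMin {m n : ℕ} (A : Matrix (Fin m) (Fin n) ℝ) : ℝ :=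
  sInf {r | ∃ x : Fin n → ℝ, vecNorm x = 1 ∧ r = vecNorm (A.mulVec x)}

/-!
Each `vᵢ` is perturbed to its projection `⟪vᵢ, q⟫ q` onto the cone axis. The perturbation
`eᵢ = ⟪vᵢ, q⟫ q - vᵢ` has squared norm `‖vᵢ‖² - ⟪vᵢ, q⟫²`, which the cone condition bounds
by `2μ‖vᵢ‖²`. The two projections are multiples of `q`, so some unit `x ∈ ℝ²` kills them,
and then `‖[v₁ v₂] x‖ = ‖x₀ e₁ + x₁ e₂‖ ≤ (|x₀| + |x₁|) max ‖eᵢ‖ ≤ √2 max ‖eᵢ‖`.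
-/

lemma vecNorm_eq_norm_toLp {m : ℕ} (v : Fin m → ℝ) : vecNorm v = ‖WithLp.toLp 2 v‖ := by
  simp [vecNorm, EuclideanSpace.norm_eq]

lemma sum_mul_eq_inner_toLp {m : ℕ} (v w : Fin m → ℝ) :
    ∑ i, v i * w i = inner ℝ (WithLp.toLp 2 v) (WithLp.toLp 2 w) := by
  simp [PiLp.inner_apply, mul_comm]

lemma vecNorm_nonneg {m : ℕ} (v : Fin m → ℝ) : 0 ≤ vecNorm v := Real.sqrt_nonneg _

lemma vecNorm_add_le {m : ℕ} (v w : Fin m → ℝ) : vecNorm (v + w) ≤ vecNorm v + vecNorm w := by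
  simpa only [vecNorm_eq_norm_toLp, WithLp.toLp_add] using norm_add_le _ _

lemma vecNorm_smul {m : ℕ} (c : ℝ) (v : Fin m → ℝ) : vecNorm (c • v) = |c| * vecNorm v := by
  simp only [vecNorm_eq_norm_toLp, WithLp.toLp_smul, norm_smul, Real.norm_eq_abs]

lemma vecNorm_neg {m : ℕ} (v : Fin m → ℝ) : vecNorm (-v) = vecNorm v := by
  simp only [vecNorm_eq_norm_toLp, WithLp.toLp_neg, norm_neg]

lemma vecNorm_pos {m : ℕ} {v : Fin m → ℝ} (hv : v ≠ 0) : 0 < vecNorm v := by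
  rw [vecNorm_eq_norm_toLp, norm_pos_iff]
  exact fun h => hv (congrArg WithLp.ofLp h)

section Cone

variable {E : Type*} [NormedAddCommGroup E] [InnerProductSpace ℝ E]

lemma norm_inner_smul_sub_sq {q : E} (hq : ‖q‖ = 1) (v : E) :
    ‖inner ℝ v q • q - v‖ ^ 2 = ‖v‖ ^ 2 - inner ℝ v q ^ 2 := by
  rw [norm_sub_sq_real, norm_smul, real_inner_smul_left, real_inner_comm, hq, Real.norm_eq_abs,
    mul_one, sq_abs]
  ring

lemma norm_inner_smul_sub_le_of_mem_cone {q v : E} {μ : ℝ} (hq : ‖q‖ = 1)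
    (hcone : (1 - μ) * ‖v‖ ≤ inner ℝ v q) :
    ‖inner ℝ v q • q - v‖ ≤ Real.sqrt (2 * μ) * ‖v‖ := by
  have hcs : |inner ℝ v q| ≤ ‖v‖ := by simpa [hq] using abs_real_inner_le_norm v q
  have hsq : ‖inner ℝ v q • q - v‖ ^ 2 ≤ 2 * μ * ‖v‖ ^ 2 := by
    rw [norm_inner_smul_sub_sq hq]
    -- μ ≤ 1: ⟪v, q⟫ ≥ (1 - μ)‖v‖ ≥ 0 gives ⟪v, q⟫² ≥ (1 - 2μ)‖v‖²; μ > 1: trivial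
    nlinarith [abs_le.mp hcs, norm_nonneg v, sq_nonneg μ]
  calc ‖inner ℝ v q • q - v‖ = Real.sqrt (‖inner ℝ v q • q - v‖ ^ 2) :=
        (Real.sqrt_sq (norm_nonneg _)).symm
    _ ≤ Real.sqrt (2 * μ * ‖v‖ ^ 2) := Real.sqrt_le_sqrt hsq
    _ = Real.sqrt (2 * μ) * ‖v‖ := by
        rw [Real.sqrt_mul' _ (sq_nonneg _), Real.sqrt_sq (norm_nonneg _)]

end Cone

lemma sMin_le_vecNorm_mulVec {m n : ℕ} (A : Matrix (Fin m) (Fin n) ℝ) {x : Fin n → ℝ}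
    (hx : vecNorm x = 1) : sMin A ≤ vecNorm (A *ᵥ x) :=
  csInf_le ⟨0, by rintro r ⟨y, -, rfl⟩; exact vecNorm_nonneg _⟩ ⟨x, hx, rfl⟩

lemma sMin_le_vecNorm_mulVec_div {m n : ℕ} (A : Matrix (Fin m) (Fin n) ℝ) {y : Fin n → ℝ}
    (hy : y ≠ 0) : sMin A ≤ vecNorm (A *ᵥ y) / vecNorm y := by
  have hpos := vecNorm_pos hy
  have hunit : vecNorm ((vecNorm y)⁻¹ • y) = 1 := by
    rw [vecNorm_smul, abs_inv, abs_of_pos hpos, inv_mul_cancel₀ hpos.ne']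
  calc sMin A ≤ vecNorm (A *ᵥ ((vecNorm y)⁻¹ • y)) := sMin_le_vecNorm_mulVec A hunit
    _ = vecNorm (A *ᵥ y) / vecNorm y := by
      rw [Matrix.mulVec_smul, vecNorm_smul, abs_inv, abs_of_pos hpos, inv_mul_eq_div]

lemma of_two_columns_mulVec {k : ℕ} (v₁ v₂ : Fin k → ℝ) (y : Fin 2 → ℝ) :
    (Matrix.of fun (i : Fin k) (j : Fin 2) => if j = 0 then v₁ i else v₂ i) *ᵥ y
      = y 0 • v₁ + y 1 • v₂ := by
  ext i
  simp [Matrix.mulVec, dotProduct, Fin.sum_univ_two, mul_comm]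

lemma abs_add_abs_le_sqrt_two_mul_vecNorm (y : Fin 2 → ℝ) :
    |y 0| + |y 1| ≤ Real.sqrt 2 * vecNorm y := by
  rw [vecNorm, Fin.sum_univ_two, ← Real.sqrt_mul zero_le_two]
  apply Real.le_sqrt_of_sq_le
  nlinarith [sq_abs (y 0), sq_abs (y 1), sq_nonneg (|y 0| - |y 1|)]

lemma sMin_two_columns_le_of_smul_add_smul_eq_zero {k : ℕ} {v₁ v₂ e₁ e₂ : Fin k → ℝ} {y : Fin 2 → ℝ}
    (hy : y ≠ 0) (hker : y 0 • (v₁ + e₁) + y 1 • (v₂ + e₂) = 0) :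
    sMin (Matrix.of fun (i : Fin k) (j : Fin 2) => if j = 0 then v₁ i else v₂ i)
      ≤ Real.sqrt 2 * max (vecNorm e₁) (vecNorm e₂) := by
  have hAy : y 0 • v₁ + y 1 • v₂ = -(y 0 • e₁ + y 1 • e₂) := by
    rw [eq_neg_iff_add_eq_zero, ← hker, smul_add, smul_add]; abel
  have hnorm : vecNorm (-(y 0 • e₁ + y 1 • e₂))
      ≤ Real.sqrt 2 * vecNorm y * max (vecNorm e₁) (vecNorm e₂) :=
    calc vecNorm (-(y 0 • e₁ + y 1 • e₂)) ≤ |y 0| * vecNorm e₁ + |y 1| * vecNorm e₂ := by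
          rw [vecNorm_neg, ← vecNorm_smul, ← vecNorm_smul]; exact vecNorm_add_le _ _
      _ ≤ (|y 0| + |y 1|) * max (vecNorm e₁) (vecNorm e₂) := by
          rw [add_mul]; gcongr; exacts [le_max_left _ _, le_max_right _ _]
      _ ≤ Real.sqrt 2 * vecNorm y * max (vecNorm e₁) (vecNorm e₂) := by
          gcongr
          · exact (vecNorm_nonneg _).trans (le_max_left _ _)
          · exact abs_add_abs_le_sqrt_two_mul_vecNorm y
  calc _ ≤ _ := sMin_le_vecNorm_mulVec_div _ hy
    _ ≤ Real.sqrt 2 * max (vecNorm e₁) (vecNorm e₂) := by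
      rw [of_two_columns_mulVec, hAy, div_le_iff₀ (vecNorm_pos hy)]
      exact hnorm.trans_eq (by ring)

lemma sMin_two_columns_le_of_collinear {k : ℕ} {v₁ v₂ e₁ e₂ : Fin k → ℝ} {c : ℝ}
    (hcol : v₁ + e₁ = c • (v₂ + e₂) ∨ v₂ + e₂ = c • (v₁ + e₁)) :
    sMin (Matrix.of fun (i : Fin k) (j : Fin 2) => if j = 0 then v₁ i else v₂ i)
      ≤ Real.sqrt 2 * max (vecNorm e₁) (vecNorm e₂) := by
  rcases hcol with h | h
  · refine sMin_two_columns_le_of_smul_add_smul_eq_zero (y := ![1, -c]) (fun hy => ?_) ?_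
    · simpa using congrFun hy 0
    · simp [h, -smul_add]
  · refine sMin_two_columns_le_of_smul_add_smul_eq_zero (y := ![-c, 1]) (fun hy => ?_) ?_
    · simpa using congrFun hy 1
    · simp [h, -smul_add]

lemma exists_smul_smul_eq_or {V : Type*} [AddCommGroup V] [Module ℝ V] (a₁ a₂ : ℝ) (q : V) :
    ∃ c : ℝ, a₁ • q = c • (a₂ • q) ∨ a₂ • q = c • (a₁ • q) := by
  by_cases h : a₂ = 0
  · exact ⟨0, Or.inr (by simp [h])⟩
  · exact ⟨a₁ / a₂, Or.inl (by rw [smul_smul, div_mul_cancel₀ _ h])⟩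

lemma vecNorm_sum_mul_smul_sub_le_of_mem_cone {k : ℕ} {q v : Fin k → ℝ} {μ : ℝ}
    (hq : vecNorm q = 1) (hv : v ≠ 0) (hcone : 1 - μ ≤ (∑ i, v i * q i) / vecNorm v) :
    vecNorm ((∑ i, v i * q i) • q - v) ≤ Real.sqrt (2 * μ) * vecNorm v := by
  rw [le_div_iff₀ (vecNorm_pos hv)] at hcone
  simp only [vecNorm_eq_norm_toLp, sum_mul_eq_inner_toLp, WithLp.toLp_sub, WithLp.toLp_smul] at *
  exact norm_inner_smul_sub_le_of_mem_cone hq hcone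

theorem cone_two_vectors_nearly_collinear_general
    (k : ℕ) (q v₁ v₂ : Fin k → ℝ) (μ : ℝ)
    (hq : vecNorm q = 1)
    (hv₁0 : v₁ ≠ 0) (hv₂0 : v₂ ≠ 0)
    (hcone₁ : 1 - μ ≤ (∑ i, v₁ i * q i) / vecNorm v₁)
    (hcone₂ : 1 - μ ≤ (∑ i, v₂ i * q i) / vecNorm v₂) :
    (∃ e₁ e₂ : Fin k → ℝ,
        vecNorm e₁ ≤ Real.sqrt (2 * μ) * vecNorm v₁ ∧
        vecNorm e₂ ≤ Real.sqrt (2 * μ) * vecNorm v₂ ∧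
        ∃ c : ℝ, v₁ + e₁ = c • (v₂ + e₂) ∨ v₂ + e₂ = c • (v₁ + e₁))
    ∧ sMin (Matrix.of fun (i : Fin k) (j : Fin 2) => if j = 0 then v₁ i else v₂ i)
        ≤ Real.sqrt 2 * Real.sqrt (2 * μ) * max (vecNorm v₁) (vecNorm v₂) := by
  set a₁ := ∑ i, v₁ i * q i
  set a₂ := ∑ i, v₂ i * q i
  have he₁ := vecNorm_sum_mul_smul_sub_le_of_mem_cone hq hv₁0 hcone₁
  have he₂ := vecNorm_sum_mul_smul_sub_le_of_mem_cone hq hv₂0 hcone₂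
  obtain ⟨c, hc⟩ := exists_smul_smul_eq_or a₁ a₂ q
  rw [← add_sub_cancel v₁ (a₁ • q), ← add_sub_cancel v₂ (a₂ • q)] at hc
  refine ⟨⟨_, _, he₁, he₂, c, hc⟩, ?_⟩
  calc _ ≤ Real.sqrt 2 * max (vecNorm (a₁ • q - v₁)) (vecNorm (a₂ • q - v₂)) :=
        sMin_two_columns_le_of_collinear hc
    _ ≤ Real.sqrt 2 * (Real.sqrt (2 * μ) * max (vecNorm v₁) (vecNorm v₂)) := by
      rw [mul_max_of_nonneg _ _ (Real.sqrt_nonneg (2 * μ))]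
      exact mul_le_mul_of_nonneg_left (max_le_max he₁ he₂) (Real.sqrt_nonneg _)
    _ = _ := (mul_assoc _ _ _).symm

/-- two nonzero vectors in the same cone K_μ(q) can be made
collinear by perturbations of norm at most √(2μ) times their norms; hence the
smallest singular value of the k×2 matrix [v₁ v₂] is at most
√2·√(2μ)·max(‖v₁‖,‖v₂‖). -/
theorem cone_two_vectors_nearly_collinear
    (k : ℕ) (q v₁ v₂ : Fin k → ℝ) (μ : ℝ)
    (hq : vecNorm q = 1) (hμ0 : 0 ≤ μ) (hμ1 : μ ≤ 1)
    (hv₁0 : v₁ ≠ 0) (hv₂0 : v₂ ≠ 0)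
    (hcone₁ : 1 - μ ≤ (∑ i, v₁ i * q i) / vecNorm v₁)
    (hcone₂ : 1 - μ ≤ (∑ i, v₂ i * q i) / vecNorm v₂) :
    (∃ e₁ e₂ : Fin k → ℝ,
        vecNorm e₁ ≤ Real.sqrt (2 * μ) * vecNorm v₁ ∧
        vecNorm e₂ ≤ Real.sqrt (2 * μ) * vecNorm v₂ ∧
        ∃ c : ℝ, v₁ + e₁ = c • (v₂ + e₂) ∨ v₂ + e₂ = c • (v₁ + e₁))
    ∧ sMin (Matrix.of fun (i : Fin k) (j : Fin 2) => if j = 0 then v₁ i else v₂ i)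
        ≤ Real.sqrt 2 * Real.sqrt (2 * μ) * max (vecNorm v₁) (vecNorm v₂) :=
  cone_two_vectors_nearly_collinear_general k q v₁ v₂ μ hq hv₁0 hv₂0 hcone₁ hcone₂
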